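/- arXiv:2203.03116 — 2 statements merged into one kernel-verified Lean document; each statement's English description precedes it below -/
import Mathlib

section
/- Let k ≥ 3 be an odd integer, let c > 0, let s be an integer with (k+1)/2 ≤ s ≤ k−1, and let a_1 < ⋯ < a_s be distinct real numbers. Consider the homogeneous linear system in (A_1, …, A_s) ∈ ℝ^s given by Σ_{j=1}^{s} A_j · a_j^l · exp(−c·a_j) = 0 for all l ∈ {0, …, (k−3)/2}, together with (when s ≥ (k+3)/2) Σ_{j=1}^{s} A_j · a_j^r · exp(c·a_j) = 0 for all r ∈ {0, …, s − (k+3)/2} (an (s−1) × s system). Then the solution space of this system is exactly one-dimensional. -/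
/-- The right-sided kernel packet system on points `a_1 < ⋯ < a_s`, with parameters
`k` (odd, `≥ 3`) and `c > 0`: the `(k-1)/2` equations
`∑_j A_j a_j^l exp(-c a_j) = 0` for `l = 0, …, (k-3)/2`, together with (only when
`s ≥ (k+3)/2`) the auxiliary equations `∑_j A_j a_j^r exp(c a_j) = 0` for
`r = 0, …, s - (k+3)/2`; in total `s - 1` equations. -/
def RightSidedKPSystem (k : ℕ) (c : ℝ) {s : ℕ} (a : Fin s → ℝ) (A : Fin s → ℝ) : Prop :=
  (∀ l ≤ (k - 3) / 2, ∑ j, A j * a j ^ l * Real.exp (-(c * a j)) = 0) ∧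
  (∀ r : ℕ, r + (k + 3) / 2 ≤ s → ∑ j, A j * a j ^ r * Real.exp (c * a j) = 0)

/-! With `k = 2u + 1` and `s = u + n + 1`, the system reads `M A = 0` for the `(u + n) × s`
matrix `M` whose rows are the functions `xˡ e^{-cx}` (`l < u`) and `xʳ e^{cx}` (`r < n`) sampled
at the nodes. These rows are linearly independent: multiplied by `e^{cx}`, a vanishing
combination becomes `p(x) + q(x) e^{2cx}` with `deg p < u`, `deg q < n`, vanishing at `s > u + n`
points. By Rolle's theorem its derivative `p' + (q' + 2c q) e^{2cx}` vanishes at one point fewer,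
and `q ↦ q' + 2c q` is injective and preserves `deg q < n`, so induction on `u` gives `p = q = 0`.
Hence `M` has rank `s - 1` and its kernel is a line. -/

open Polynomial Matrix

theorem exists_strictMono_hasDerivAt_eq_zero {f f' : ℝ → ℝ} (hf : ∀ x, HasDerivAt f (f' x) x)
    {N : ℕ} {b : Fin (N + 1) → ℝ} (hb : StrictMono b) (hz : ∀ j, f (b j) = 0) :
    ∃ b' : Fin N → ℝ, StrictMono b' ∧ ∀ j, f' (b' j) = 0 := by
  have hrolle (j : Fin N) : ∃ x ∈ Set.Ioo (b j.castSucc) (b j.succ), f' x = 0 :=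
    exists_hasDerivAt_eq_zero (hb Fin.castSucc_lt_succ)
      (fun x _ => (hf x).continuousAt.continuousWithinAt) (by rw [hz, hz]) fun x _ => hf x
  choose b' hb'_mem hb'_zero using hrolle
  refine ⟨b', fun i j hij => ?_, hb'_zero⟩
  calc b' i < b i.succ := (hb'_mem i).2
    _ ≤ b j.castSucc := hb.monotone (Fin.succ_le_castSucc_iff.mpr hij)
    _ < b' j := (hb'_mem j).1

namespace Polynomial

variable {R : Type*}

theorem eq_zero_of_degree_lt_of_injective_eval_eq_zero [CommRing R] [IsDomain R] {p : R[X]}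
    {n N : ℕ} (hp : p.degree < n) (hN : n ≤ N) {b : Fin N → R} (hb : Function.Injective b)
    (hz : ∀ j, p.eval (b j) = 0) : p = 0 :=
  eq_zero_of_degree_lt_of_eval_index_eq_zero (s := Finset.univ) hb.injOn
    (hp.trans_le (by simpa using hN)) fun j _ => hz j

theorem eq_zero_of_derivative_add_smul_eq_zero [CommRing R] [IsDomain R] {t : R} (ht : t ≠ 0)
    {q : R[X]} (h : derivative q + t • q = 0) : q = 0 := by
  have hlead := congrArg (coeff · q.natDegree) h
  simpa [coeff_derivative, ht] using hlead

theorem degree_derivative_add_smul_lt [Semiring R] {t : R} {q : R[X]} {n : ℕ}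
    (hq : q.degree < n) : (derivative q + t • q).degree < n :=
  (degree_add_le _ _).trans_lt <| max_lt (degree_derivative_le.trans_lt hq)
    ((degree_smul_le _ _).trans_lt hq)

theorem degree_derivative_lt_of_degree_lt_succ [Semiring R] {p : R[X]} {m : ℕ}
    (hp : p.degree < ↑(m + 1)) : (derivative p).degree < m := by
  rw [degree_lt_iff_coeff_zero] at hp ⊢
  intro i hi
  simp [coeff_derivative, hp (i + 1) (by omega)]

theorem eval_degreeLTEquiv_symm [CommRing R] {m : ℕ} (g : Fin m → R) (x : R) :
    ((degreeLTEquiv R m).symm g : R[X]).eval x = ∑ i, g i * x ^ (i : ℕ) := by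
  rw [eval_eq_sum_degreeLTEquiv (Submodule.coe_mem _)]
  simp

end Polynomial

theorem hasDerivAt_eval_add_eval_mul_exp (p q : ℝ[X]) (t x : ℝ) :
    HasDerivAt (fun y => p.eval y + q.eval y * Real.exp (t * y))
      ((derivative p).eval x + (derivative q + t • q).eval x * Real.exp (t * x)) x := by
  have hexp : HasDerivAt (fun y => Real.exp (t * y)) (Real.exp (t * x) * t) x :=
    (Real.hasDerivAt_exp _).comp x ((hasDerivAt_id x).const_mul t |>.congr_deriv (mul_one t))
  refine ((p.hasDerivAt x).add ((q.hasDerivAt x).mul hexp)).congr_deriv ?_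
  simp only [eval_add, eval_smul, smul_eq_mul]
  ring

theorem eq_zero_of_eval_add_eval_mul_exp_eq_zero {t : ℝ} (ht : t ≠ 0) {m n N : ℕ} {p q : ℝ[X]}
    (hp : p.degree < m) (hq : q.degree < n) (hN : m + n ≤ N) {b : Fin N → ℝ}
    (hb : StrictMono b) (hz : ∀ j, p.eval (b j) + q.eval (b j) * Real.exp (t * b j) = 0) :
    p = 0 ∧ q = 0 := by
  induction m generalizing p q N with
  | zero =>
    obtain rfl : p = 0 := degree_eq_bot.mp (WithBot.lt_coe_bot.mp hp)
    refine ⟨rfl, eq_zero_of_degree_lt_of_injective_eval_eq_zero hq (by omega) hb.injective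
      fun j => ?_⟩
    simpa [Real.exp_ne_zero] using hz j
  | succ m ih =>
    obtain ⟨N, rfl⟩ : ∃ N', N = N' + 1 := ⟨N - 1, by omega⟩
    obtain ⟨b', hb', hz'⟩ :=
      exists_strictMono_hasDerivAt_eq_zero (hasDerivAt_eval_add_eval_mul_exp p q t) hb hz
    obtain ⟨-, hq'⟩ := ih (degree_derivative_lt_of_degree_lt_succ hp)
      (degree_derivative_add_smul_lt hq) (by omega) hb' hz'
    obtain rfl := eq_zero_of_derivative_add_smul_eq_zero ht hq'
    exact ⟨eq_zero_of_degree_lt_of_injective_eval_eq_zero hp (by omega) hb.injective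
      (by simpa using hz), rfl⟩

noncomputable def expVandermonde (t : ℝ) (m : ℕ) {s : ℕ} (a : Fin s → ℝ) :
    Matrix (Fin m) (Fin s) ℝ :=
  of fun l j => a j ^ (l : ℕ) * Real.exp (t * a j)

noncomputable def kpMatrix (c : ℝ) (u n : ℕ) {s : ℕ} (a : Fin s → ℝ) :
    Matrix (Fin u ⊕ Fin n) (Fin s) ℝ :=
  fromRows (expVandermonde (-c) u a) (expVandermonde c n a)

section

variable {t c : ℝ} {m u n s : ℕ} {a : Fin s → ℝ}

theorem vecMul_expVandermonde_apply (g : Fin m → ℝ) (j : Fin s) :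
    (g ᵥ* expVandermonde t m a) j =
      ((degreeLTEquiv ℝ m).symm g : ℝ[X]).eval (a j) * Real.exp (t * a j) := by
  simp only [vecMul, dotProduct, expVandermonde, of_apply, eval_degreeLTEquiv_symm,
    Finset.sum_mul, mul_assoc]

theorem expVandermonde_mulVec_eq_zero_iff {A : Fin s → ℝ} :
    expVandermonde t m a *ᵥ A = 0 ↔ ∀ l < m, ∑ j, A j * a j ^ l * Real.exp (t * a j) = 0 := by
  simp only [funext_iff, Fin.forall_iff, mulVec, dotProduct, expVandermonde, of_apply,
    Pi.zero_apply]
  exact forall₂_congr fun l _ =>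
    iff_of_eq (congrArg (· = 0) (Finset.sum_congr rfl fun _ _ => by ring))

theorem eq_zero_of_vecMul_kpMatrix_eq_zero (hc : c ≠ 0) (hs : u + n ≤ s) (ha : StrictMono a)
    {v : Fin u ⊕ Fin n → ℝ} (hv : v ᵥ* kpMatrix c u n a = 0) : v = 0 := by
  set p := (degreeLTEquiv ℝ u).symm (v ∘ Sum.inl)
  set q := (degreeLTEquiv ℝ n).symm (v ∘ Sum.inr)
  -- multiplying by `exp (c x)` turns the row combination into `p + q · exp (2 c x)`
  have hz (j : Fin s) :
      (p : ℝ[X]).eval (a j) + (q : ℝ[X]).eval (a j) * Real.exp (2 * c * a j) = 0 := by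
    have hj := congrFun hv j
    simp only [kpMatrix, vecMul_fromRows, Pi.add_apply, vecMul_expVandermonde_apply,
      Pi.zero_apply] at hj
    have hinv : Real.exp (c * a j) * Real.exp (-c * a j) = 1 := by
      rw [← Real.exp_add, ← add_mul, add_neg_cancel, zero_mul, Real.exp_zero]
    have hsq : Real.exp (2 * c * a j) = Real.exp (c * a j) * Real.exp (c * a j) := by
      rw [← Real.exp_add, ← add_mul, two_mul]
    linear_combination Real.exp (c * a j) * hj - (p : ℝ[X]).eval (a j) * hinv
      + (q : ℝ[X]).eval (a j) * hsq
  obtain ⟨hp, hq⟩ := eq_zero_of_eval_add_eval_mul_exp_eq_zero (mul_ne_zero two_ne_zero hc)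
    (mem_degreeLT.mp p.2) (mem_degreeLT.mp q.2) hs ha hz
  have hinl : v ∘ Sum.inl = 0 := by
    simpa [p, Submodule.coe_eq_zero] using hp
  have hinr : v ∘ Sum.inr = 0 := by
    simpa [q, Submodule.coe_eq_zero] using hq
  ext (i | i)
  · exact congrFun hinl i
  · exact congrFun hinr i

theorem finrank_ker_kpMatrix (hc : c ≠ 0) (hs : u + n ≤ s) (ha : StrictMono a) :
    Module.finrank ℝ (LinearMap.ker (kpMatrix c u n a).mulVecLin) = s - (u + n) := by
  have hrows : LinearIndependent ℝ (kpMatrix c u n a).row := by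
    rw [← vecMul_injective_iff, ← coe_vecMulLinear, injective_iff_map_eq_zero]
    exact fun v hv => eq_zero_of_vecMul_kpMatrix_eq_zero hc hs ha hv
  have hrank : (kpMatrix c u n a).rank = u + n := by simpa using hrows.rank_matrix
  have := LinearMap.finrank_range_add_finrank_ker (kpMatrix c u n a).mulVecLin
  rw [← rank, hrank, Module.finrank_fin_fun] at this
  omega

end

theorem rightSidedKPSystem_iff_mulVec_kpMatrix_eq_zero {c : ℝ} {u n : ℕ} (hu : 1 ≤ u)
    (a A : Fin (u + n + 1) → ℝ) :
    RightSidedKPSystem (2 * u + 1) c a A ↔ kpMatrix c u n a *ᵥ A = 0 := by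
  have hneg (x : ℝ) : -(c * x) = -c * x := (neg_mul c x).symm
  rw [kpMatrix, fromRows_mulVec, ← Sum.elim_zero_zero, Sum.elim_eq_iff,
    expVandermonde_mulVec_eq_zero_iff, expVandermonde_mulVec_eq_zero_iff, RightSidedKPSystem]
  simp only [hneg]
  refine and_congr (forall_congr' fun l => ?_) (forall_congr' fun r => ?_) <;>
    exact imp_congr_left (by omega)

theorem Submodule.exists_smul_add_smul_eq_zero_of_finrank_eq_one {K V : Type*} [Field K]
    [AddCommGroup V] [Module K V] {W : Submodule K V} (hW : Module.finrank K W = 1)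
    {x y : V} (hx : x ∈ W) (hy : y ∈ W) :
    ∃ α β : K, ¬(α = 0 ∧ β = 0) ∧ α • x + β • y = 0 := by
  have : Module.Finite K W := Module.finite_of_finrank_eq_succ hW
  by_contra hdep
  have hli : LinearIndependent K ![(⟨x, hx⟩ : W), ⟨y, hy⟩] := by
    refine LinearIndependent.pair_iff.mpr fun α β h => ?_
    by_contra hne
    exact hdep ⟨α, β, hne, by simpa using congrArg Subtype.val h⟩
  simpa [hW] using hli.fintype_card_le_finrank

theorem right_sided_kp_system_solution_space_one_dimensional_general
    (k : ℕ) (hk3 : 3 ≤ k) (hkodd : Odd k) (c : ℝ) (hc : 0 < c)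
    (s : ℕ) (hs1 : (k + 1) / 2 ≤ s)
    (a : Fin s → ℝ) (ha : StrictMono a) :
    (∃ A : Fin s → ℝ, A ≠ 0 ∧ RightSidedKPSystem k c a A) ∧
    (∀ A B : Fin s → ℝ, RightSidedKPSystem k c a A → RightSidedKPSystem k c a B →
      ∃ α β : ℝ, ¬(α = 0 ∧ β = 0) ∧ α • A + β • B = 0) := by
  obtain ⟨u, rfl⟩ := hkodd
  obtain ⟨n, rfl⟩ : ∃ n, s = u + n + 1 := ⟨s - u - 1, by omega⟩
  set K := LinearMap.ker (kpMatrix c u n a).mulVecLin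
  have hK : Module.finrank ℝ K = 1 := by
    rw [finrank_ker_kpMatrix hc.ne' (by omega) ha]
    omega
  have hmem (A : Fin (u + n + 1) → ℝ) : RightSidedKPSystem (2 * u + 1) c a A ↔ A ∈ K := by
    rw [rightSidedKPSystem_iff_mulVec_kpMatrix_eq_zero (by omega), LinearMap.mem_ker,
      mulVecLin_apply]
  refine ⟨?_, fun A B hA hB => ?_⟩
  · obtain ⟨A, hAK, hA0⟩ := Submodule.exists_mem_ne_zero_of_ne_bot
      (Submodule.one_le_finrank_iff.mp hK.ge)
    exact ⟨A, hA0, (hmem A).mpr hAK⟩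
  · exact Submodule.exists_smul_add_smul_eq_zero_of_finrank_eq_one hK ((hmem A).mp hA)
      ((hmem B).mp hB)

/-- For odd `k ≥ 3`, `c > 0`, `(k+1)/2 ≤ s ≤ k-1`, and points
`a_1 < ⋯ < a_s`, the solution space of the right-sided kernel packet system (an
`(s-1) × s` system) is exactly one-dimensional: a nonzero solution exists and any two
solutions are linearly dependent. -/
theorem right_sided_kp_system_solution_space_one_dimensional
    (k : ℕ) (hk3 : 3 ≤ k) (hkodd : Odd k) (c : ℝ) (hc : 0 < c)
    (s : ℕ) (hs1 : (k + 1) / 2 ≤ s) (hs2 : s ≤ k - 1)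
    (a : Fin s → ℝ) (ha : StrictMono a) :
    (∃ A : Fin s → ℝ, A ≠ 0 ∧ RightSidedKPSystem k c a A) ∧
    (∀ A B : Fin s → ℝ, RightSidedKPSystem k c a A → RightSidedKPSystem k c a B →
      ∃ α β : ℝ, ¬(α = 0 ∧ β = 0) ∧ α • A + β • B = 0) :=
  right_sided_kp_system_solution_space_one_dimensional_general k hk3 hkodd c hc s hs1 a ha
end

section
/- Let p ≥ 0 be an integer, let c > 0, let m ≥ 2, let b_1 < ⋯ < b_m be distinct real numbers, let 1 ≤ τ < m, and let t ∈ (b_τ, b_{τ+1}). Let B_1, …, B_m be real coefficients and define ψ(x) = Σ_{j=1}^{m} B_j · K(x, b_j), ψ_1(x) = Σ_{j=1}^{τ} B_j · K(x, b_j), and ψ_2(x) = Σ_{j=τ+1}^{m} B_j · K(x, b_j). If there exists ε > 0 such that ψ(x) = 0 for all x ∈ (t − ε, t + ε), then: ψ_1(x) = ψ(x) for all x < b_τ and ψ_1(x) = 0 for all x ≥ b_τ; and ψ_2(x) = 0 for all x ≤ b_{τ+1} and ψ_2(x) = ψ(x) for all x > b_{τ+1}. -/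
/-
For a center `a ≤ x` the kernel is `K(x, a) = e^{ca} P_p(x - a) e^{-cx}`, and for `x ≤ a` it is
`e^{-ca} P_p(a - x) e^{cx}`. Hence on `[b_τ, b_{τ+1}]` we have `ψ₁(x) = Q(x) e^{-cx}` and
`ψ₂(x) = R(x) e^{cx}` for polynomials `Q`, `R`, and these formulas persist on `[b_τ, ∞)` and
`(-∞, b_{τ+1}]` respectively. The function `Q(x) e^{-cx} + R(x) e^{cx}` is real analytic and
vanishes near `t`, hence everywhere; multiplying by `e^{-cx}` and letting `x → ∞` forces `R = 0`,
and then `Q = 0`. So `ψ₁` vanishes on `[b_τ, ∞)`, `ψ₂` on `(-∞, b_{τ+1}]`, and `ψ = ψ₁ + ψ₂`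
gives the rest.
-/

/-- The polynomial factor `P_p(u) = (p! / (2p)!) ∑_{j=0}^{p} ((p+j)! / (j! (p-j)!)) (2cu)^{p-j}`
appearing in the half-integer Matérn kernel. -/
noncomputable def maternPoly (p : ℕ) (c : ℝ) (u : ℝ) : ℝ :=
  ((p.factorial : ℝ) / ((2 * p).factorial : ℝ)) *
    ∑ j ∈ Finset.range (p + 1),
      (((p + j).factorial : ℝ) / ((j.factorial : ℝ) * ((p - j).factorial : ℝ))) *
        (2 * c * u) ^ (p - j)

/-- The half-integer Matérn kernel with smoothness `ν = p + 1/2`: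
`K(x, x') = P_p(|x - x'|) exp (-c |x - x'|)`. -/
noncomputable def maternKernel (p : ℕ) (c : ℝ) (x x' : ℝ) : ℝ :=
  maternPoly p c |x - x'| * Real.exp (-(c * |x - x'|))

open Polynomial Filter Real Set Finset Topology

noncomputable def maternPolynomial (p : ℕ) (c : ℝ) : ℝ[X] :=
  C ((p.factorial : ℝ) / ((2 * p).factorial : ℝ)) *
    ∑ j ∈ range (p + 1),
      C (((p + j).factorial : ℝ) / ((j.factorial : ℝ) * ((p - j).factorial : ℝ))) *
        (C (2 * c) * X) ^ (p - j)

@[simp]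
lemma eval_maternPolynomial (p : ℕ) (c u : ℝ) :
    (maternPolynomial p c).eval u = maternPoly p c u := by
  simp [maternPolynomial, maternPoly, eval_finsetSum, mul_pow]

lemma maternKernel_of_le {p : ℕ} {c x y : ℝ} (h : y ≤ x) :
    maternKernel p c x y = exp (c * y) * maternPoly p c (x - y) * exp (-(c * x)) := by
  rw [maternKernel, abs_of_nonneg (sub_nonneg.2 h), show -(c * (x - y)) = c * y + -(c * x) by ring,
    exp_add]
  ring

lemma maternKernel_of_ge {p : ℕ} {c x y : ℝ} (h : x ≤ y) :
    maternKernel p c x y = exp (-(c * y)) * maternPoly p c (y - x) * exp (c * x) := by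
  rw [maternKernel, abs_of_nonpos (sub_nonpos.2 h), neg_sub,
    show -(c * (y - x)) = -(c * y) + c * x by ring, exp_add]
  ring

section CenterSums

variable {ι : Type*} (p : ℕ) (c : ℝ) (s : Finset ι) (a w : ι → ℝ)

noncomputable def maternLeftPoly : ℝ[X] :=
  ∑ j ∈ s, C (w j * exp (c * a j)) * (maternPolynomial p c).comp (X - C (a j))

noncomputable def maternRightPoly : ℝ[X] :=
  ∑ j ∈ s, C (w j * exp (-(c * a j))) * (maternPolynomial p c).comp (C (a j) - X)

variable {p c s a w}

lemma sum_maternKernel_eq_maternLeftPoly {x : ℝ} (hx : ∀ j ∈ s, a j ≤ x) :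
    ∑ j ∈ s, w j * maternKernel p c x (a j) =
      (maternLeftPoly p c s a w).eval x * exp (-(c * x)) := by
  rw [maternLeftPoly, eval_finsetSum, Finset.sum_mul]
  refine Finset.sum_congr rfl fun j hj => ?_
  simp only [maternKernel_of_le (hx j hj), eval_mul, eval_C, eval_comp, eval_sub, eval_X,
    eval_maternPolynomial]
  ring

lemma sum_maternKernel_eq_maternRightPoly {x : ℝ} (hx : ∀ j ∈ s, x ≤ a j) :
    ∑ j ∈ s, w j * maternKernel p c x (a j) =
      (maternRightPoly p c s a w).eval x * exp (c * x) := by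
  rw [maternRightPoly, eval_finsetSum, Finset.sum_mul]
  refine Finset.sum_congr rfl fun j hj => ?_
  simp only [maternKernel_of_ge (hx j hj), eval_mul, eval_C, eval_comp, eval_sub, eval_X,
    eval_maternPolynomial]
  ring

end CenterSums

lemma Polynomial.eq_zero_of_tendsto_atTop_zero {P : ℝ[X]}
    (h : Tendsto (fun x => P.eval x) atTop (𝓝 0)) : P = 0 :=
  leadingCoeff_eq_zero.1 ((tendsto_nhds_iff P).1 h).1

lemma Polynomial.tendsto_eval_mul_exp_neg_atTop (P : ℝ[X]) {c : ℝ} (hc : 0 < c) :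
    Tendsto (fun x => P.eval x * exp (-(c * x))) atTop (𝓝 0) := by
  have hc' : c ≠ 0 := hc.ne'
  have h := (tendsto_div_exp_atTop (P.comp (C c⁻¹ * X))).comp (tendsto_id.const_mul_atTop hc)
  refine h.congr fun x => ?_
  simp [eval_comp, exp_neg, div_eq_mul_inv, inv_mul_cancel_left₀ hc']

lemma Polynomial.eq_zero_of_eval_mul_exp_neg_add_eval_mul_exp_eqOn {Q R : ℝ[X]} {c : ℝ}
    (hc : 0 < c) {U : Set ℝ} (hU : IsOpen U) (hne : U.Nonempty)
    (h : ∀ x ∈ U, Q.eval x * exp (-(c * x)) + R.eval x * exp (c * x) = 0) :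
    Q = 0 ∧ R = 0 := by
  obtain ⟨x₀, hx₀⟩ := hne
  have hanalytic : AnalyticOnNhd ℝ (fun x => Q.eval x * exp (-(c * x)) + R.eval x * exp (c * x))
      univ := by
    intro x _
    have hQ := AnalyticOnNhd.eval_polynomial (𝕜 := ℝ) Q x (mem_univ x)
    have hR := AnalyticOnNhd.eval_polynomial (𝕜 := ℝ) R x (mem_univ x)
    fun_prop
  have hzero : ∀ x, Q.eval x * exp (-(c * x)) + R.eval x * exp (c * x) = 0 := fun x =>
    hanalytic.eqOn_zero_of_preconnected_of_eventuallyEq_zero isPreconnected_univ (mem_univ x₀)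
      (eventuallyEq_of_mem (hU.mem_nhds hx₀) h) (mem_univ x)
  have hR_eq : ∀ x, R.eval x = -(Q.eval x * exp (-(2 * c * x))) := fun x => by
    have hx := congrArg (· * exp (-(c * x))) (hzero x)
    simp only [add_mul, mul_assoc, ← exp_add, zero_mul] at hx
    rw [show c * x + -(c * x) = 0 by ring, exp_zero, mul_one] at hx
    rw [show -(2 * c * x) = -(c * x) + -(c * x) by ring]
    linarith
  have hR : R = 0 := eq_zero_of_tendsto_atTop_zero <| by
    simpa only [neg_zero, ← hR_eq] using
      (Q.tendsto_eval_mul_exp_neg_atTop (by positivity : 0 < 2 * c)).neg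
  refine ⟨Polynomial.funext fun x => ?_, hR⟩
  simpa [hR, exp_ne_zero] using hzero x

lemma sum_maternKernel_eq_zero_of_separated {ι : Type*} {p : ℕ} {c : ℝ} (hc : 0 < c)
    {a w : ι → ℝ} {s₁ s₂ : Finset ι} {α β : ℝ} (h₁ : ∀ j ∈ s₁, a j ≤ α)
    (h₂ : ∀ j ∈ s₂, β ≤ a j) {U : Set ℝ} (hU : IsOpen U) (hne : U.Nonempty)
    (hUαβ : U ⊆ Icc α β)
    (h : ∀ x ∈ U, ∑ j ∈ s₁, w j * maternKernel p c x (a j) +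
      ∑ j ∈ s₂, w j * maternKernel p c x (a j) = 0) :
    (∀ x, α ≤ x → ∑ j ∈ s₁, w j * maternKernel p c x (a j) = 0) ∧
    (∀ x, x ≤ β → ∑ j ∈ s₂, w j * maternKernel p c x (a j) = 0) := by
  have hleft : ∀ x, α ≤ x → ∑ j ∈ s₁, w j * maternKernel p c x (a j) =
      (maternLeftPoly p c s₁ a w).eval x * exp (-(c * x)) := fun x hx =>
    sum_maternKernel_eq_maternLeftPoly fun j hj => (h₁ j hj).trans hx
  have hright : ∀ x, x ≤ β → ∑ j ∈ s₂, w j * maternKernel p c x (a j) =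
      (maternRightPoly p c s₂ a w).eval x * exp (c * x) := fun x hx =>
    sum_maternKernel_eq_maternRightPoly fun j hj => hx.trans (h₂ j hj)
  obtain ⟨hQ, hR⟩ := eq_zero_of_eval_mul_exp_neg_add_eval_mul_exp_eqOn hc hU hne fun x hx => by
    rw [← hleft x (hUαβ hx).1, ← hright x (hUαβ hx).2]
    exact h x hx
  exact ⟨fun x hx => by rw [hleft x hx, hQ, eval_zero, zero_mul],
    fun x hx => by rw [hright x hx, hR, eval_zero, zero_mul]⟩

/-- (Splitting lemma.) Let `p ≥ 0`, `c > 0`, `b_1 < ⋯ < b_m` (`m ≥ 2`),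
`1 ≤ τ < m`, and `t ∈ (b_τ, b_{τ+1})`. Here `τ = i + 1` with the points `0`-indexed:
`b_τ = b i`, `b_{τ+1} = b (i+1)`, `ψ1` sums the first `τ` terms (`j ≤ i`) and `ψ2` the
remaining ones (`j > i`). If `ψ(x) = ∑_j B_j K(x, b_j)` vanishes on `(t - ε, t + ε)` for
some `ε > 0`, then `ψ1 = ψ` on `(-∞, b_τ)` and `ψ1 = 0` on `[b_τ, ∞)`, while `ψ2 = 0` on
`(-∞, b_{τ+1}]` and `ψ2 = ψ` on `(b_{τ+1}, ∞)`. -/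
theorem matern_sum_vanishing_on_interval_splits
    (p : ℕ) (c : ℝ) (hc : 0 < c)
    (m : ℕ)
    (b : Fin m → ℝ) (hb : StrictMono b)
    (i : ℕ) (hi : i + 1 < m)
    (t : ℝ) (ht : t ∈ Set.Ioo (b ⟨i, by omega⟩) (b ⟨i + 1, hi⟩))
    (B : Fin m → ℝ)
    (ψ ψ1 ψ2 : ℝ → ℝ)
    (hψ : ∀ x, ψ x = ∑ j, B j * maternKernel p c x (b j))
    (hψ1 : ∀ x, ψ1 x = ∑ j ∈ Finset.univ.filter (fun j : Fin m => (j : ℕ) ≤ i),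
      B j * maternKernel p c x (b j))
    (hψ2 : ∀ x, ψ2 x = ∑ j ∈ Finset.univ.filter (fun j : Fin m => i < (j : ℕ)),
      B j * maternKernel p c x (b j))
    (ε : ℝ) (hε : 0 < ε)
    (hzero : ∀ x ∈ Set.Ioo (t - ε) (t + ε), ψ x = 0) :
    (∀ x, x < b ⟨i, by omega⟩ → ψ1 x = ψ x) ∧
    (∀ x, b ⟨i, by omega⟩ ≤ x → ψ1 x = 0) ∧
    (∀ x, x ≤ b ⟨i + 1, hi⟩ → ψ2 x = 0) ∧
    (∀ x, b ⟨i + 1, hi⟩ < x → ψ2 x = ψ x) := by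
  obtain ⟨hbt, htb⟩ := ht
  have hsplit : ∀ x, ψ x = ψ1 x + ψ2 x := fun x => by
    rw [hψ, hψ1, hψ2, ← sum_filter_add_sum_filter_not univ (fun j : Fin m => (j : ℕ) ≤ i)]
    simp only [not_le]
  have hne : (Ioo (t - ε) (t + ε) ∩ Ioo (b ⟨i, by omega⟩) (b ⟨i + 1, hi⟩)).Nonempty :=
    ⟨t, ⟨by linarith, by linarith⟩, hbt, htb⟩
  obtain ⟨hψ1_zero, hψ2_zero⟩ := sum_maternKernel_eq_zero_of_separated hc
    (s₁ := univ.filter fun j : Fin m => (j : ℕ) ≤ i) (s₂ := univ.filter fun j : Fin m => i < j)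
    (fun j hj => hb.monotone (show j ≤ ⟨i, by omega⟩ from (mem_filter.1 hj).2))
    (fun j hj => hb.monotone (show ⟨i + 1, hi⟩ ≤ j from (mem_filter.1 hj).2))
    (isOpen_Ioo.inter isOpen_Ioo) hne (fun x hx => ⟨hx.2.1.le, hx.2.2.le⟩)
    (fun x hx => by rw [← hψ1, ← hψ2, ← hsplit]; exact hzero x hx.1)
  simp only [← hψ1, ← hψ2] at hψ1_zero hψ2_zero
  refine ⟨fun x hx => ?_, hψ1_zero, hψ2_zero, fun x hx => ?_⟩
  · rw [hsplit, hψ2_zero x (hx.trans (hbt.trans htb)).le, add_zero]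
  · rw [hsplit, hψ1_zero x ((hbt.trans htb).trans hx).le, zero_add]
end
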